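/- arXiv:1112.0819 — 4 statements merged into one kernel-verified Lean document; each statement's English description precedes it below -/
import Mathlib

section
/- Let M be a partial order and let B₁, B₂ ∈ CWT(M). Then B₁ ≤*_M B₂ if and only if every almost front of B₁ is an almost front of B₂. -/
open Set Cardinal

universe u

variable {α : Type u}

section OrderDefs

variable [PartialOrder α]

/-- `η` and `ν` are compatible in `M`: they have a common `≤`-upper bound in `M`. -/
def Compat (M : Set α) (η ν : α) : Prop :=
  ∃ ρ ∈ M, η ≤ ρ ∧ ν ≤ ρ

/-- The set of immediate successors of `ν` inside `B`. -/
def succIn (B : Set α) (ν : α) : Set α :=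
  {ρ ∈ B | ν < ρ ∧ ¬∃ σ ∈ B, ν < σ ∧ σ < ρ}

/-- The set of maximal elements of `B`. -/
def maxIn (B : Set α) : Set α :=
  {η ∈ B | ∀ ν ∈ B, ¬η < ν}

/-- `r` is the root (least element) of `B`. -/
def IsRoot (B : Set α) (r : α) : Prop :=
  r ∈ B ∧ ∀ x ∈ B, r ≤ x

/-- `B` is a countable well-founded subtree of `M`. -/
def CWT (M B : Set α) : Prop :=
  B ⊆ M ∧ B.Countable ∧ (∃ r, IsRoot B r) ∧
  (∀ ν ∈ B, ∀ η ∈ B, ∀ ρ ∈ B, η ≤ ν → ρ ≤ ν → η ≤ ρ ∨ ρ ≤ η) ∧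
  (∀ C, C ⊆ B → IsChain (· ≤ ·) C → C.Finite) ∧
  (∀ ν ∈ B, succIn B ν = ∅ ∨ (succIn B ν).Infinite) ∧
  (∀ η ∈ B, ∀ ν ∈ B, ¬η ≤ ν → ¬ν ≤ η → ¬Compat M η ν) ∧
  (∀ ν ∈ B \ maxIn B, ∀ F : Finset α, (F : Set α) ⊆ M \ {ρ | ρ ≤ ν} →
    {ϱ ∈ succIn B ν | ∀ ρ ∈ F, ¬Compat M ρ ϱ}.Infinite)

/-- `Y` is a front of `B`: a maximal set of pairwise incomparable members of `B`. -/
def IsFront (B Y : Set α) : Prop :=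
  Y ⊆ B ∧ (∀ η ∈ Y, ∀ ν ∈ Y, η ≠ ν → ¬η ≤ ν) ∧
  (∀ ν ∈ B, ∃ η ∈ Y, η ≤ ν ∨ ν ≤ η)

/-- `B'` is an exhaustive subtree of `B`. -/
def sb (M B B' : Set α) : Prop :=
  CWT M B' ∧ B' ⊆ B ∧ (∃ r, IsRoot B r ∧ IsRoot B' r) ∧
  ∀ ν ∈ B', succIn B' ν ⊆ succIn B ν ∧ (succIn B ν \ succIn B' ν).Finite

/-- `B'` is a positive subtree of `B`. -/
def psb (M B B' : Set α) : Prop :=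
  CWT M B' ∧ B' ⊆ B ∧ (∃ r, IsRoot B r ∧ IsRoot B' r) ∧
  ∀ ν ∈ B' \ maxIn B, (succIn B' ν).Infinite ∧ succIn B' ν ⊆ succIn B ν

/-- `Y` is an almost front of `B`: an antichain of `M` whose intersection with some
exhaustive subtree `B'` of `B` is a front of `B'`. -/
def IsAlmostFront (M B Y : Set α) : Prop :=
  Y ⊆ M ∧ (∀ η ∈ Y, ∀ ν ∈ Y, η ≠ ν → ¬η ≤ ν) ∧
  ∃ B', sb M B B' ∧ IsFront B' (Y ∩ B')

/-- The relation `B₁ ≤*_M B₂`. -/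
def leStar (M B₁ B₂ : Set α) : Prop :=
  CWT M B₁ ∧ CWT M B₂ ∧ (∃ r, IsRoot B₁ r ∧ IsRoot B₂ r) ∧
  ∃ B₂', sb M B₂ B₂' ∧ psb M B₁ (B₂' ∩ B₁) ∧
    ∀ Y, IsAlmostFront M (B₂' ∩ B₁) Y → IsAlmostFront M B₂ Y

end OrderDefs

/-!
Forward: an almost front of `B₁`, witnessed by `E ∈ sb(B₁)`, is an almost front of every positive
subtree `B'` of `B₁`, witnessed by `E ∩ B'`; so it passes through `B₂' ∩ B₁` to `B₂`.

Backward: the roots agree because `{rt(B₁)}` is an almost front of `B₁`. Apply the hypothesis to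
the front of `B₁` formed by the first nodes that are maximal in `B₁` or leave `B₂`. It yields
`C ∈ sb(B₂)` such that `C ∩ B₁` is downward closed in `B₁` and every node of `C` is comparable
with a node of `C` maximal in `B₁`. Then every child in `C` of a node `x` of `C ∩ B₁` lies below a
child of `x` in `C ∩ B₁`, and distinct children are incompatible, so `C ∩ B₁` is a positive
subtree of `B₁`. An almost front `Y` of `C ∩ B₁`, witnessed by `E`, is an almost front of `C`
witnessed by the part of `C` lying below `E` or above `Y ∩ E`: a child missing from that part lies
below a child missing from `E` at a node below it, and there are only finitely many of those.
-/

section Trees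

variable [PartialOrder α] {M B B' : Set α}

theorem IsRoot.eq {r r' : α} (h : IsRoot B r) (h' : IsRoot B r') : r = r' :=
  le_antisymm (h.2 r' h'.1) (h'.2 r h.1)

theorem Compat.of_le_right {ρ a b : α} (h : Compat M ρ b) (hab : a ≤ b) : Compat M ρ a :=
  let ⟨ξ, hξ, hρξ, hbξ⟩ := h
  ⟨ξ, hξ, hρξ, hab.trans hbξ⟩

theorem notMem_maxIn_iff {x : α} (hx : x ∈ B) : x ∉ maxIn B ↔ ∃ μ ∈ B, x < μ := by
  simp [maxIn, hx]

theorem mem_maxIn_of_subset {x : α} (hsub : B' ⊆ B) (hx : x ∈ B') (h : x ∈ maxIn B) :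
    x ∈ maxIn B' :=
  ⟨hx, fun μ hμ => h.2 μ (hsub hμ)⟩

theorem eq_of_mem_maxIn_of_le {μ y : α} (hμ : μ ∈ maxIn B) (hy : y ∈ B) (h : μ ≤ y) : μ = y :=
  eq_of_le_of_not_lt h (hμ.2 y hy)

theorem lt_of_mem_maxIn_of_comparable {x y : α} (hy : y ∈ maxIn B) (hx : x ∈ B)
    (hxmax : x ∉ maxIn B) (h : x ≤ y ∨ y ≤ x) : x < y := by
  rcases h with h | h
  · exact h.lt_of_ne (by rintro rfl; exact hxmax hy)
  · exact absurd (eq_of_mem_maxIn_of_le hy hx h ▸ hy) hxmax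

theorem eq_of_mem_succIn_of_lt_of_le {x w γ : α} (hγ : γ ∈ succIn B x) (hw : w ∈ B)
    (hxw : x < w) (hwγ : w ≤ γ) : w = γ :=
  eq_of_le_of_not_lt hwγ fun h => hγ.2.2 ⟨w, hw, hxw, h⟩

theorem not_le_of_mem_succIn {x a b : α} (ha : a ∈ succIn B x) (hb : b ∈ succIn B x)
    (hne : a ≠ b) : ¬a ≤ b :=
  fun hle => hb.2.2 ⟨a, ha.1, ha.2.1, hle.lt_of_ne hne⟩

namespace CWT

theorem le_total_of_le (hB : CWT M B) {ν η ρ : α} (hν : ν ∈ B) (hη : η ∈ B) (hρ : ρ ∈ B)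
    (hην : η ≤ ν) (hρν : ρ ≤ ν) : η ≤ ρ ∨ ρ ≤ η :=
  hB.2.2.2.1 ν hν η hη ρ hρ hην hρν

theorem succIn_eq_empty_or_infinite (hB : CWT M B) {ν : α} (hν : ν ∈ B) :
    succIn B ν = ∅ ∨ (succIn B ν).Infinite :=
  hB.2.2.2.2.2.1 ν hν

theorem infinite_succIn_not_compat (hB : CWT M B) {ν : α} (hν : ν ∈ B) (hνmax : ν ∉ maxIn B)
    (F : Finset α) (hF : (F : Set α) ⊆ M \ {ρ | ρ ≤ ν}) :
    {ϱ ∈ succIn B ν | ∀ ρ ∈ F, ¬Compat M ρ ϱ}.Infinite :=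
  hB.2.2.2.2.2.2.2 ν ⟨hν, hνmax⟩ F hF

theorem mono (hB : CWT M B) (hsub : B' ⊆ B) (hroot : ∃ r, IsRoot B' r)
    (hsucc : ∀ ν ∈ B', succIn B' ν = ∅ ∨ (succIn B' ν).Infinite)
    (hspread : ∀ ν ∈ B' \ maxIn B', ∀ F : Finset α, (F : Set α) ⊆ M \ {ρ | ρ ≤ ν} →
      {ϱ ∈ succIn B' ν | ∀ ρ ∈ F, ¬Compat M ρ ϱ}.Infinite) : CWT M B' :=
  ⟨hsub.trans hB.1, hB.2.1.mono hsub, hroot,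
    fun _ hν _ hη _ hρ => hB.le_total_of_le (hsub hν) (hsub hη) (hsub hρ),
    fun C hC => hB.2.2.2.2.1 C (hC.trans hsub), hsucc,
    fun η hη ν hν => hB.2.2.2.2.2.2.1 η (hsub hη) ν (hsub hν), hspread⟩

theorem finite_le (hB : CWT M B) {x : α} (hx : x ∈ B) : {ζ ∈ B | ζ ≤ x}.Finite :=
  hB.2.2.2.2.1 _ (sep_subset _ _)
    fun _ ha _ hb _ => hB.le_total_of_le hx ha.1 hb.1 ha.2 hb.2

theorem exists_isLeast (hB : CWT M B) {x : α} {S : Set α} (hx : x ∈ B)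
    (hS : S ⊆ {ζ ∈ B | ζ ≤ x}) (hne : S.Nonempty) : ∃ m, IsLeast S m := by
  obtain ⟨m, hm⟩ := ((hB.finite_le hx).subset hS).exists_minimal hne
  refine ⟨m, hm.1, fun a ha => ?_⟩
  obtain ⟨hmB, hmx⟩ := hS hm.1
  obtain ⟨haB, hax⟩ := hS ha
  exact (hB.le_total_of_le hx hmB haB hmx hax).elim id (hm.le_of_le ha)

theorem exists_isGreatest (hB : CWT M B) {x : α} {S : Set α} (hx : x ∈ B)
    (hS : S ⊆ {ζ ∈ B | ζ ≤ x}) (hne : S.Nonempty) : ∃ m, IsGreatest S m := by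
  obtain ⟨m, hm⟩ := ((hB.finite_le hx).subset hS).exists_maximal hne
  refine ⟨m, hm.1, fun a ha => ?_⟩
  obtain ⟨hmB, hmx⟩ := hS hm.1
  obtain ⟨haB, hax⟩ := hS ha
  exact (hB.le_total_of_le hx haB hmB hax hmx).elim id (hm.le_of_ge ha)

theorem exists_succIn_le (hB : CWT M B) {x z : α} (hz : z ∈ B) (hxz : x < z) :
    ∃ w ∈ succIn B x, w ≤ z := by
  obtain ⟨w, ⟨hwB, hxw, hwz⟩, hleast⟩ := hB.exists_isLeast (S := {w ∈ B | x < w ∧ w ≤ z}) hz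
    (fun w hw => ⟨hw.1, hw.2.2⟩) ⟨z, hz, hxz, le_rfl⟩
  refine ⟨w, ⟨hwB, hxw, ?_⟩, hwz⟩
  rintro ⟨σ, hσ, hxσ, hσw⟩
  exact hσw.not_ge (hleast ⟨hσ, hxσ, hσw.le.trans hwz⟩)

theorem exists_maxIn_ge (hB : CWT M B) {x : α} (hx : x ∈ B) : ∃ m ∈ maxIn B, x ≤ m := by
  have hbounded : ∀ c ⊆ B, IsChain (· ≤ ·) c → ∀ y ∈ c, ∃ ub ∈ B, ∀ z ∈ c, z ≤ ub := by
    intro c hc hchain y hy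
    obtain ⟨m, hm⟩ := (hB.2.2.2.2.1 c hc hchain).exists_maximal ⟨y, hy⟩
    exact ⟨m, hc hm.1, fun z hz => (hchain.total hm.1 hz).elim (hm.le_of_ge hz) id⟩
  obtain ⟨m, hxm, hm⟩ := zorn_le_nonempty₀ B hbounded x hx
  exact ⟨m, ⟨hm.1, fun ν hν hlt => hlt.not_ge (hm.2 hν hlt.le)⟩, hxm⟩

theorem le_of_lt_of_mem_succIn (hB : CWT M B) {x γ γ' : α} (hγ : γ ∈ B)
    (hγ' : γ' ∈ succIn B γ) (hx : x ∈ B) (hxγ' : x < γ') : x ≤ γ := by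
  rcases hB.le_total_of_le hγ'.1 hx hγ hxγ'.le hγ'.2.1.le with h | h
  · exact h
  · rcases h.eq_or_lt with rfl | hlt
    · exact le_rfl
    · exact absurd ⟨x, hx, hlt, hxγ'⟩ hγ'.2.2

theorem not_compat_of_mem_succIn (hB : CWT M B) {x a b : α} (ha : a ∈ succIn B x)
    (hb : b ∈ succIn B x) (hne : a ≠ b) : ¬Compat M a b :=
  hB.2.2.2.2.2.2.1 a ha.1 b hb.1 (not_le_of_mem_succIn ha hb hne)
    (not_le_of_mem_succIn hb ha hne.symm)

/-- Distinct children of a node are incompatible, so each element of `M` bounds at most one. -/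
theorem finite_of_subset_succIn (hB : CWT M B) {x : α} {S T : Set α} (hS : S ⊆ succIn B x)
    (hT : T.Finite) (hTM : T ⊆ M) (hST : ∀ γ ∈ S, ∃ t ∈ T, γ ≤ t) : S.Finite := by
  have hfiber : ∀ t ∈ T, {γ ∈ S | γ ≤ t}.Subsingleton := fun t ht a ha b hb => by
    by_contra hab
    exact hB.not_compat_of_mem_succIn (hS ha.1) (hS hb.1) hab ⟨t, hTM ht, ha.2, hb.2⟩
  refine (hT.biUnion fun t ht => (hfiber t ht).finite).subset fun γ hγ => ?_
  obtain ⟨t, ht, hγt⟩ := hST γ hγ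
  exact mem_biUnion ht ⟨hγ, hγt⟩

theorem exists_succIn_notMem_le (hB : CWT M B) {E : Set α} {r y : α} (hr : IsRoot B r)
    (hrE : r ∈ E) (hy : y ∈ B) (hyE : y ∉ E) : ∃ x ∈ E, ∃ v ∈ succIn B x, v ∉ E ∧ v ≤ y := by
  obtain ⟨x, ⟨-, hxE, hxy⟩, hgreatest⟩ := hB.exists_isGreatest
    (S := {ζ ∈ B | ζ ∈ E ∧ ζ ≤ y}) hy (fun ζ hζ => ⟨hζ.1, hζ.2.2⟩) ⟨r, hr.1, hrE, hr.2 y hy⟩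
  obtain ⟨v, hv, hvy⟩ := hB.exists_succIn_le hy (hxy.lt_of_ne (by rintro rfl; exact hyE hxE))
  exact ⟨x, hxE, v, hv, fun hvE => hv.2.1.not_ge (hgreatest ⟨hv.1, hvE, hvy⟩), hvy⟩

end CWT

end Trees

section Subtrees

variable [PartialOrder α] {M B B' B'' E Y : Set α}

def DownClosedIn (B' B : Set α) : Prop :=
  ∀ x ∈ B', ∀ ζ ∈ B, ζ ≤ x → ζ ∈ B'

theorem succIn_eq_inter_of_downClosedIn (hsub : B' ⊆ B) (hdc : DownClosedIn B' B) (ν : α) :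
    succIn B' ν = succIn B ν ∩ B' := by
  ext ρ
  constructor
  · rintro ⟨hρ, hνρ, himm⟩
    exact ⟨⟨hsub hρ, hνρ, fun ⟨σ, hσ, hνσ, hσρ⟩ =>
      himm ⟨σ, hdc ρ hρ σ hσ hσρ.le, hνσ, hσρ⟩⟩, hρ⟩
  · rintro ⟨⟨-, hνρ, himm⟩, hρ⟩
    exact ⟨hρ, hνρ, fun ⟨σ, hσ, hνσ, hσρ⟩ => himm ⟨σ, hsub hσ, hνσ, hσρ⟩⟩

theorem CWT.downClosedIn_of_succIn_subset (hB : CWT M B) (hB' : CWT M B') (hsub : B' ⊆ B)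
    {r : α} (hr : IsRoot B r) (hrB' : r ∈ B') (hsucc : ∀ ν ∈ B', succIn B' ν ⊆ succIn B ν) :
    DownClosedIn B' B := by
  intro x hx ζ hζ hζx
  by_contra hζB'
  obtain ⟨a, ⟨haB', -, haζ⟩, hgreatest⟩ := hB'.exists_isGreatest
    (S := {w ∈ B' | w ≤ x ∧ w < ζ}) hx (fun w hw => ⟨hw.1, hw.2.1⟩)
    ⟨r, hrB', hr.2 x (hsub hx), (hr.2 ζ hζ).lt_of_ne fun h => hζB' (h ▸ hrB')⟩
  obtain ⟨b, hb, hbx⟩ := hB'.exists_succIn_le hx (haζ.trans_le hζx)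
  have hbζ : b ≠ ζ := fun h => hζB' (h ▸ hb.1)
  rcases hB.le_total_of_le (hsub hx) (hsub hb.1) hζ hbx hζx with h | h
  · exact hb.2.1.not_ge (hgreatest ⟨hb.1, hbx, h.lt_of_ne hbζ⟩)
  · exact (hsucc a haB' hb).2.2 ⟨ζ, hζ, haζ, h.lt_of_ne hbζ.symm⟩

theorem sb.isRoot {r : α} (h : sb M B B') (hr : IsRoot B r) : IsRoot B' r := by
  obtain ⟨r', hr', hrB'⟩ := h.2.2.1
  exact hr'.eq hr ▸ hrB'

theorem sb.downClosedIn (h : sb M B B') (hB : CWT M B) : DownClosedIn B' B := by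
  obtain ⟨hB', hsub, ⟨r, hr, hrB'⟩, hsucc⟩ := h
  exact hB.downClosedIn_of_succIn_subset hB' hsub hr hrB'.1 fun ν hν => (hsucc ν hν).1

theorem psb.downClosedIn (h : psb M B B') (hB : CWT M B) : DownClosedIn B' B := by
  obtain ⟨hB', hsub, ⟨r, hr, hrB'⟩, hsucc⟩ := h
  refine hB.downClosedIn_of_succIn_subset hB' hsub hr hrB'.1 fun ν hν => ?_
  by_cases hmax : ν ∈ maxIn B
  · exact fun ρ hρ => absurd hρ.2.1 (hmax.2 ρ (hsub hρ.1))
  · exact (hsucc ν ⟨hν, hmax⟩).2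

theorem sb.maxIn_subset (h : sb M B B') (hB : CWT M B) : maxIn B' ⊆ maxIn B := by
  intro ν hν
  by_contra hνB
  obtain ⟨μ, hμ, hνμ⟩ := (notMem_maxIn_iff (h.2.1 hν.1)).1 hνB
  obtain ⟨w, hw, -⟩ := hB.exists_succIn_le hμ hνμ
  have hinf := (hB.succIn_eq_empty_or_infinite (h.2.1 hν.1)).resolve_left
    (nonempty_of_mem hw).ne_empty
  obtain ⟨ρ, hρ, hρ'⟩ := (hinf.sdiff (h.2.2.2 ν hν.1).2).nonempty
  have hρB' : ρ ∈ succIn B' ν := not_not.1 fun h' => hρ' ⟨hρ, h'⟩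
  exact hν.2 ρ hρB'.1 hρB'.2.1

theorem psb.maxIn_subset (h : psb M B B') : maxIn B' ⊆ maxIn B := by
  intro ν hν
  by_contra hνB
  obtain ⟨ρ, hρ⟩ := (h.2.2.2 ν ⟨hν.1, hνB⟩).1.nonempty
  exact hν.2 ρ hρ.1 hρ.2.1

theorem CWT.sb_refl (hB : CWT M B) : sb M B B :=
  ⟨hB, subset_rfl, hB.2.2.1.imp fun _ hr => ⟨hr, hr⟩, fun _ _ => ⟨subset_rfl, by simp⟩⟩

theorem sb.trans (h : sb M B B') (h' : sb M B' B'') : sb M B B'' := by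
  obtain ⟨-, hsub, ⟨r, hr, hrB'⟩, hsucc⟩ := h
  have hrB'' := h'.isRoot hrB'
  obtain ⟨hB'', hsub', -, hsucc'⟩ := h'
  refine ⟨hB'', hsub'.trans hsub, ⟨r, hr, hrB''⟩, fun ν hν => ?_⟩
  obtain ⟨hsub₁, hfin₁⟩ := hsucc ν (hsub' hν)
  obtain ⟨hsub₂, hfin₂⟩ := hsucc' ν hν
  refine ⟨hsub₂.trans hsub₁, (hfin₁.union hfin₂).subset fun ρ hρ => ?_⟩
  by_cases hρB' : ρ ∈ succIn B' ν
  · exact Or.inr ⟨hρB', hρ.2⟩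
  · exact Or.inl ⟨hρ.1, hρB'⟩

theorem CWT.sb_of_downClosedIn (hB : CWT M B) (hsub : B' ⊆ B) (hdc : DownClosedIn B' B)
    {r : α} (hr : IsRoot B r) (hrB' : r ∈ B') (hfin : ∀ ν ∈ B', (succIn B ν \ B').Finite) :
    sb M B B' := by
  have hsucc := succIn_eq_inter_of_downClosedIn hsub hdc
  have hrB'root : IsRoot B' r := ⟨hrB', fun x hx => hr.2 x (hsub hx)⟩
  refine ⟨hB.mono hsub ⟨r, hrB'root⟩ (fun ν hν => ?_) (fun ν hν F hF => ?_), hsub,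
    ⟨r, hr, hrB'root⟩, fun ν hν => ⟨by rw [hsucc]; exact inter_subset_left, ?_⟩⟩
  · rcases hB.succIn_eq_empty_or_infinite (hsub hν) with h | h
    · left
      rw [hsucc, h, empty_inter]
    · right
      rw [hsucc, ← sdiff_sdiff_right_self]
      exact h.sdiff (hfin ν hν)
  · obtain ⟨hν, hνmax⟩ := hν
    refine ((hB.infinite_succIn_not_compat (hsub hν)
      (fun h => hνmax (mem_maxIn_of_subset hsub hν h)) F hF).sdiff (hfin ν hν)).mono ?_
    rintro ϱ ⟨⟨hϱ, havoid⟩, hϱB'⟩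
    rw [hsucc]
    exact ⟨⟨hϱ, not_not.1 fun h => hϱB' ⟨hϱ, h⟩⟩, havoid⟩
  · rw [hsucc, sdiff_self_inter]
    exact hfin ν hν

theorem IsFront.isAlmostFront (hY : IsFront B Y) (hB : CWT M B) : IsAlmostFront M B Y := by
  have hYB : Y ∩ B = Y := inter_eq_left.2 hY.1
  exact ⟨hY.1.trans hB.1, hY.2.1, B, hB.sb_refl, hYB.symm ▸ hY⟩

theorem IsAlmostFront.of_sb (hY : IsAlmostFront M B' Y) (h : sb M B B') :
    IsAlmostFront M B Y :=
  let ⟨hYM, hYanti, E, hE, hYE⟩ := hY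
  ⟨hYM, hYanti, E, h.trans hE, hYE⟩

theorem IsFront.inter_of_downClosedIn {D : Set α} (hY : IsFront E (Y ∩ E)) (hD : CWT M D)
    (hDE : D ⊆ E) (hdc : DownClosedIn D E) (hmax : maxIn D ⊆ maxIn E) :
    IsFront D (Y ∩ D) := by
  refine ⟨inter_subset_right, fun η hη ν hν => hY.2.1 η ⟨hη.1, hDE hη.2⟩ ν ⟨hν.1, hDE hν.2⟩,
    fun τ hτ => ?_⟩
  obtain ⟨μ, hμ, hτμ⟩ := hD.exists_maxIn_ge hτ
  obtain ⟨y, hy, hyμ⟩ := hY.2.2 μ (hDE hμ.1)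
  have hyμ : y ≤ μ := hyμ.elim id fun h => (eq_of_mem_maxIn_of_le (hmax hμ) hy.2 h).ge
  have hyD : y ∈ D := hdc μ hμ.1 y hy.2 hyμ
  exact ⟨y, ⟨hy.1, hyD⟩, hD.le_total_of_le hμ.1 hyD hτ hyμ hτμ⟩

theorem IsAlmostFront.of_psb {B₁ : Set α} (hY : IsAlmostFront M B₁ Y) (h₁ : CWT M B₁)
    (hpsb : psb M B₁ B) : IsAlmostFront M B Y := by
  obtain ⟨hYM, hYanti, E, hE, hYE⟩ := hY
  obtain ⟨r, hr₁, hr⟩ := hpsb.2.2.1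
  have hdcE := hE.downClosedIn h₁
  have hdcB := hpsb.downClosedIn h₁
  have hEB : sb M B (E ∩ B) := by
    refine hpsb.1.sb_of_downClosedIn inter_subset_right
      (fun x hx ζ hζ hζx => ⟨hdcE x hx.1 ζ (hpsb.2.1 hζ) hζx, hζ⟩) hr
      ⟨(hE.isRoot hr₁).1, hr.1⟩ fun ν hν => (hE.2.2.2 ν hν.1).2.subset ?_
    rintro ρ ⟨hρ, hρE⟩
    rw [succIn_eq_inter_of_downClosedIn hpsb.2.1 hdcB] at hρ
    exact ⟨hρ.1, fun h => hρE ⟨h.1, hρ.2⟩⟩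
  refine ⟨hYM, hYanti, E ∩ B, hEB, hYE.inter_of_downClosedIn hEB.1 inter_subset_left
    (fun x hx ζ hζ hζx => ⟨hζ, hdcB x hx.2 ζ (hE.2.1 hζ) hζx⟩) fun μ hμ => ?_⟩
  exact mem_maxIn_of_subset hE.2.1 hμ.1.1 (hpsb.maxIn_subset (hEB.maxIn_subset hpsb.1 hμ))

end Subtrees

section Backward

variable [PartialOrder α] {M B B₁ B₂ C E Y : Set α}

theorem isFront_singleton_root {r : α} (hr : IsRoot B r) : IsFront B {r} :=
  ⟨singleton_subset_iff.2 hr.1, fun _ hη _ hν hne => (hne (hη.trans hν.symm)).elim,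
    fun ν hν => ⟨r, rfl, Or.inl (hr.2 ν hν)⟩⟩

/-- Otherwise every child of the root of the witnessing subtree would lie below `a`, so the
root would have finitely many, but not zero, children. -/
theorem IsAlmostFront.eq_root_of_singleton {a r : α} (h : IsAlmostFront M B {a})
    (hr : IsRoot B r) : a = r := by
  obtain ⟨-, -, C, hC, hfr⟩ := h
  have hrC := hC.isRoot hr
  obtain ⟨b, ⟨hb, hbC⟩, -⟩ := hfr.2.2 r hrC.1
  have haC : a ∈ C := mem_singleton_iff.1 hb ▸ hbC
  by_contra hne
  have hra : r < a := (hrC.2 a haC).lt_of_ne (Ne.symm hne)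
  obtain ⟨σ, hσ, -⟩ := hC.1.exists_succIn_le haC hra
  refine (hC.1.succIn_eq_empty_or_infinite hrC.1).elim (nonempty_of_mem hσ).ne_empty
    fun hinf => hinf (hC.1.finite_of_subset_succIn subset_rfl (finite_singleton a)
      (singleton_subset_iff.2 (hC.1.1 haC)) fun σ hσ => ⟨a, rfl, ?_⟩)
  obtain ⟨_, ⟨rfl, -⟩, hσa⟩ := hfr.2.2 σ hσ.1
  exact hσa.elim (fun h => (eq_of_mem_succIn_of_lt_of_le hσ haC hra h).ge) id

def exitFront (B₁ B₂ : Set α) : Set α :=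
  {ν ∈ B₁ | (ν ∈ maxIn B₁ ∨ ν ∉ B₂) ∧ ∀ ζ ∈ B₁, ζ < ν → ζ ∈ B₂}

theorem mem_maxIn_of_mem_exitFront {y : α} (hy : y ∈ exitFront B₁ B₂) (hy₂ : y ∈ B₂) :
    y ∈ maxIn B₁ :=
  hy.2.1.resolve_right (not_not.2 hy₂)

theorem isFront_exitFront (h₁ : CWT M B₁) : IsFront B₁ (exitFront B₁ B₂) := by
  refine ⟨sep_subset _ _, fun η hη ν hν hne hle => ?_, fun μ hμ => ?_⟩
  · have hlt := hle.lt_of_ne hne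
    exact (mem_maxIn_of_mem_exitFront hη (hν.2.2 η hη.1 hlt)).2 ν hν.1 hlt
  · obtain ⟨m, hm, hμm⟩ := h₁.exists_maxIn_ge hμ
    obtain ⟨z, ⟨hzB, hzm, hz⟩, hleast⟩ := h₁.exists_isLeast
      (S := {ζ ∈ B₁ | ζ ≤ m ∧ (ζ ∈ maxIn B₁ ∨ ζ ∉ B₂)}) hm.1 (fun ζ hζ => ⟨hζ.1, hζ.2.1⟩)
      ⟨m, hm.1, le_rfl, Or.inl hm⟩
    refine ⟨z, ⟨hzB, hz, fun ζ hζ hζz => ?_⟩, h₁.le_total_of_le hm.1 hzB hμ hzm hμm⟩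
    by_contra hζ₂
    exact hζz.not_ge (hleast ⟨hζ, hζz.le.trans hzm, Or.inr hζ₂⟩)

theorem exists_maxIn_comparable_of_isFront (hCB₂ : C ⊆ B₂)
    (hCfr : IsFront C (exitFront B₁ B₂ ∩ C)) {γ : α} (hγ : γ ∈ C) :
    ∃ y ∈ C ∩ maxIn B₁, γ ≤ y ∨ y ≤ γ := by
  obtain ⟨y, ⟨hy, hyC⟩, hγy⟩ := hCfr.2.2 γ hγ
  exact ⟨y, ⟨hyC, mem_maxIn_of_mem_exitFront hy (hCB₂ hyC)⟩, hγy.symm⟩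

theorem downClosedIn_inter_of_isFront (hCB₂ : C ⊆ B₂) (hdc : DownClosedIn C B₂)
    (hCfr : IsFront C (exitFront B₁ B₂ ∩ C)) : DownClosedIn (C ∩ B₁) B₁ := by
  intro x hx ζ hζ hζx
  obtain ⟨y, ⟨hy, hyC⟩, hxy⟩ := hCfr.2.2 x hx.1
  have hxy : x ≤ y := hxy.elim
    (fun h => (eq_of_mem_maxIn_of_le (mem_maxIn_of_mem_exitFront hy (hCB₂ hyC)) hx.2 h).ge) id
  have hζ₂ : ζ ∈ B₂ :=
    (hζx.trans hxy).eq_or_lt.elim (fun h => h ▸ hCB₂ hyC) fun h => hy.2.2 ζ hζ h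
  exact ⟨hdc y hyC ζ hζ₂ (hζx.trans hxy), hζ⟩

theorem exists_mem_succIn_inter_ge (h₁ : CWT M B₁) (hC : CWT M C)
    (hdc : DownClosedIn (C ∩ B₁) B₁) (hcomp : ∀ γ ∈ C, ∃ y ∈ C ∩ maxIn B₁, γ ≤ y ∨ y ≤ γ)
    {x γ : α} (hx : x ∈ C ∩ B₁) (hxmax : x ∉ maxIn B₁) (hγ : γ ∈ succIn C x) :
    ∃ w ∈ succIn (C ∩ B₁) x, γ ≤ w := by
  obtain ⟨y, ⟨hyC, hymax⟩, hγy⟩ := hcomp γ hγ.1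
  have hxy : x < y := lt_of_mem_maxIn_of_comparable hymax hx.2 hxmax <| hγy.elim
    (fun h => Or.inl (hγ.2.1.le.trans h)) (hC.le_total_of_le hγ.1 hx.1 hyC hγ.2.1.le)
  have hγy : γ ≤ y := hγy.elim id fun h => (eq_of_mem_succIn_of_lt_of_le hγ hyC hxy h).ge
  obtain ⟨w, hw, hwy⟩ := h₁.exists_succIn_le hymax.1 hxy
  have hwC : w ∈ C := (hdc y ⟨hyC, hymax.1⟩ w hw.1 hwy).1
  refine ⟨w, ?_, (hC.le_total_of_le hyC hγ.1 hwC hγy hwy).elim id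
    fun h => (eq_of_mem_succIn_of_lt_of_le hγ hwC hw.2.1 h).ge⟩
  rw [succIn_eq_inter_of_downClosedIn inter_subset_right hdc]
  exact ⟨hw, hwC, hw.1⟩

theorem infinite_succIn_inter_not_compat (h₁ : CWT M B₁) (hC : CWT M C)
    (hdc : DownClosedIn (C ∩ B₁) B₁) (hcomp : ∀ γ ∈ C, ∃ y ∈ C ∩ maxIn B₁, γ ≤ y ∨ y ≤ γ)
    {x : α} (hx : x ∈ C ∩ B₁) (hxmax : x ∉ maxIn B₁) (F : Finset α)
    (hF : (F : Set α) ⊆ M \ {ρ | ρ ≤ x}) :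
    {w ∈ succIn (C ∩ B₁) x | ∀ ρ ∈ F, ¬Compat M ρ w}.Infinite := by
  obtain ⟨y, ⟨hyC, hymax⟩, hxy⟩ := hcomp x hx.1
  have hxmaxC : x ∉ maxIn C := (notMem_maxIn_iff hx.1).2
    ⟨y, hyC, lt_of_mem_maxIn_of_comparable hymax hx.2 hxmax hxy⟩
  refine fun hfin => hC.infinite_succIn_not_compat hx.1 hxmaxC F hF
    (hC.finite_of_subset_succIn (sep_subset _ _) hfin (fun w hw => h₁.1 hw.1.1.2) ?_)
  rintro γ ⟨hγ, havoid⟩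
  obtain ⟨w, hw, hγw⟩ := exists_mem_succIn_inter_ge h₁ hC hdc hcomp hx hxmax hγ
  exact ⟨w, ⟨hw, fun ρ hρ hρw => havoid ρ hρ (hρw.of_le_right hγw)⟩, hγw⟩

theorem psb_inter (h₁ : CWT M B₁) (hC : CWT M C) (hdc : DownClosedIn (C ∩ B₁) B₁)
    (hcomp : ∀ γ ∈ C, ∃ y ∈ C ∩ maxIn B₁, γ ≤ y ∨ y ≤ γ) {r : α} (hr : IsRoot B₁ r)
    (hrC : r ∈ C) : psb M B₁ (C ∩ B₁) := by
  have hinf : ∀ ν ∈ C ∩ B₁, ν ∉ maxIn B₁ → (succIn (C ∩ B₁) ν).Infinite := fun ν hν hνmax =>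
    (infinite_succIn_inter_not_compat h₁ hC hdc hcomp hν hνmax ∅ (by simp)).mono
      (sep_subset _ _)
  have hroot : IsRoot (C ∩ B₁) r := ⟨⟨hrC, hr.1⟩, fun x hx => hr.2 x hx.2⟩
  refine ⟨h₁.mono inter_subset_right ⟨r, hroot⟩ (fun ν hν => ?_) (fun ν hν => ?_),
    inter_subset_right, ⟨r, hr, hroot⟩, fun ν hν => ⟨hinf ν hν.1 hν.2, ?_⟩⟩
  · by_cases hνmax : ν ∈ maxIn B₁
    · exact Or.inl (eq_empty_of_forall_notMem fun ρ hρ => hνmax.2 ρ hρ.1.2 hρ.2.1)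
    · exact Or.inr (hinf ν hν hνmax)
  · exact infinite_succIn_inter_not_compat h₁ hC hdc hcomp hν.1
      (fun h => hν.2 (mem_maxIn_of_subset inter_subset_right hν.1 h))
  · rw [succIn_eq_inter_of_downClosedIn inter_subset_right hdc]
    exact inter_subset_left

def hullIn (C E Y : Set α) : Set α :=
  {γ ∈ C | (∃ e ∈ E, γ ≤ e) ∨ ∃ y ∈ Y ∩ E, y ≤ γ}

theorem downClosedIn_hullIn (hC : CWT M C) (hEC : E ⊆ C) : DownClosedIn (hullIn C E Y) C := by
  rintro γ ⟨hγ, ⟨e, he, hγe⟩ | ⟨y, hy, hyγ⟩⟩ β hβ hβγ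
  · exact ⟨hβ, Or.inl ⟨e, he, hβγ.trans hγe⟩⟩
  · rcases hC.le_total_of_le hγ hβ (hEC hy.2) hβγ hyγ with h | h
    · exact ⟨hβ, Or.inl ⟨y, hy.2, h⟩⟩
    · exact ⟨hβ, Or.inr ⟨y, hy, h⟩⟩

theorem isFront_hullIn (hC : CWT M C) (hEC : E ⊆ C)
    (hYanti : ∀ η ∈ Y, ∀ ν ∈ Y, η ≠ ν → ¬η ≤ ν) (hYE : IsFront E (Y ∩ E)) :
    IsFront (hullIn C E Y) (Y ∩ hullIn C E Y) := by
  refine ⟨inter_subset_right, fun η hη ν hν => hYanti η hη.1 ν hν.1, ?_⟩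
  have hEH : E ⊆ hullIn C E Y := fun e he => ⟨hEC he, Or.inl ⟨e, he, le_rfl⟩⟩
  rintro τ ⟨hτ, ⟨e, he, hτe⟩ | ⟨y, hy, hyτ⟩⟩
  · obtain ⟨y, hy, hye⟩ := hYE.2.2 e he
    refine ⟨y, ⟨hy.1, hEH hy.2⟩, ?_⟩
    rcases hye with h | h
    · exact hC.le_total_of_le (hEC he) (hEC hy.2) hτ h hτe
    · exact Or.inr (hτe.trans h)
  · exact ⟨y, ⟨hy.1, hEH hy.2⟩, Or.inl hyτ⟩

/-- Walk in `B₁` from the root towards a node of `C` that is maximal in `B₁` and comparable with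
`γ'`; `v` is the first node on the way outside `E`. -/
theorem exists_missing_child_ge (h₁ : CWT M B₁) (hC : CWT M C)
    (hdc : DownClosedIn (C ∩ B₁) B₁) (hcomp : ∀ γ ∈ C, ∃ y ∈ C ∩ maxIn B₁, γ ≤ y ∨ y ≤ γ)
    (hEsub : E ⊆ C ∩ B₁) (hEdc : DownClosedIn E B₁) {r : α} (hr : IsRoot B₁ r) (hrE : r ∈ E)
    (hYE : IsFront E (Y ∩ E)) {γ γ' e : α} (hγ : γ ∈ C) (he : e ∈ E) (hγe : γ ≤ e)
    (hγ' : γ' ∈ succIn C γ) (hγ'H : γ' ∉ hullIn C E Y) :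
    ∃ x ∈ E, x ≤ γ ∧ ∃ v ∈ succIn (C ∩ B₁) x \ succIn E x, γ' ≤ v := by
  obtain ⟨y, ⟨hyC, hymax⟩, hγ'y⟩ := hcomp γ' hγ'.1
  have hγ'E : ∀ e ∈ E, ¬γ' ≤ e := fun e he h => hγ'H ⟨hγ'.1, Or.inl ⟨e, he, h⟩⟩
  have hyE : y ∉ E := by
    intro hyE
    obtain ⟨z, hz, hzy⟩ := hYE.2.2 y hyE
    have hzy : z ≤ y := hzy.elim id fun h => (eq_of_mem_maxIn_of_le hymax (hEsub hz.2).2 h).ge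
    exact hγ'y.elim (hγ'E y hyE) fun h => hγ'H ⟨hγ'.1, Or.inr ⟨z, hz, hzy.trans h⟩⟩
  obtain ⟨x, hxE, v, hv, hvE, hvy⟩ := h₁.exists_succIn_notMem_le hr hrE hymax.1 hyE
  have hvC : v ∈ C := (hdc y ⟨hyC, hymax.1⟩ v hv.1 hvy).1
  have hvγ : ¬v ≤ γ := fun h => hvE (hEdc e he v hv.1 (h.trans hγe))
  have hγ'v : γ' ≤ v := by
    rcases hγ'y.elim (hC.le_total_of_le hyC hvC hγ'.1 hvy) fun h => Or.inl (hvy.trans h)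
      with h | h
    · exact h.eq_or_lt.elim (fun h => h.ge)
        fun h => absurd (hC.le_of_lt_of_mem_succIn hγ hγ' hvC h) hvγ
    · exact h
  have hxγ' : x < γ' := by
    rcases hC.le_total_of_le hvC (hEsub hxE).1 hγ'.1 hv.2.1.le hγ'v with h | h
    · exact h.lt_of_ne (by rintro rfl; exact hγ'E x hxE le_rfl)
    · exact absurd h (hγ'E x hxE)
  refine ⟨x, hxE, hC.le_of_lt_of_mem_succIn hγ hγ' (hEsub hxE).1 hxγ', v,
    ⟨?_, fun h => hvE h.1⟩, hγ'v⟩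
  rw [succIn_eq_inter_of_downClosedIn inter_subset_right hdc]
  exact ⟨hv, hvC, hv.1⟩

theorem finite_succIn_diff_hullIn (h₁ : CWT M B₁) (hC : CWT M C)
    (hdc : DownClosedIn (C ∩ B₁) B₁) (hcomp : ∀ γ ∈ C, ∃ y ∈ C ∩ maxIn B₁, γ ≤ y ∨ y ≤ γ)
    (hEsub : E ⊆ C ∩ B₁) (hEdc : DownClosedIn E B₁) {r : α} (hr : IsRoot B₁ r) (hrE : r ∈ E)
    (hEfin : ∀ x ∈ E, (succIn (C ∩ B₁) x \ succIn E x).Finite) (hYE : IsFront E (Y ∩ E))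
    {γ : α} (hγ : γ ∈ hullIn C E Y) : (succIn C γ \ hullIn C E Y).Finite := by
  obtain ⟨hγC, ⟨e, he, hγe⟩ | ⟨y, hy, hyγ⟩⟩ := hγ
  · have hT : (⋃ x ∈ {x ∈ E | x ≤ γ}, succIn (C ∩ B₁) x \ succIn E x).Finite :=
      ((hC.finite_le hγC).subset fun x hx => ⟨(hEsub hx.1).1, hx.2⟩).biUnion
        fun x hx => hEfin x hx.1
    refine hC.finite_of_subset_succIn sdiff_subset hT (fun v hv => ?_) fun γ' hγ' => ?_
    · obtain ⟨x, -, hv⟩ := mem_iUnion₂.1 hv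
      exact h₁.1 hv.1.1.2
    · obtain ⟨x, hxE, hxγ, v, hv, hγ'v⟩ := exists_missing_child_ge h₁ hC hdc hcomp hEsub hEdc
        hr hrE hYE hγC he hγe hγ'.1 hγ'.2
      exact ⟨v, mem_biUnion ⟨hxE, hxγ⟩ hv, hγ'v⟩
  · refine finite_empty.subset fun γ' hγ' => hγ'.2 ⟨hγ'.1.1, Or.inr ⟨y, hy, hyγ.trans hγ'.1.2.1.le⟩⟩

theorem IsAlmostFront.of_inter (hY : IsAlmostFront M (C ∩ B₁) Y) (h₁ : CWT M B₁)
    (hC : CWT M C) (hdc : DownClosedIn (C ∩ B₁) B₁)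
    (hcomp : ∀ γ ∈ C, ∃ y ∈ C ∩ maxIn B₁, γ ≤ y ∨ y ≤ γ) {r : α} (hr₁ : IsRoot B₁ r)
    (hr : IsRoot C r) : IsAlmostFront M C Y := by
  obtain ⟨hYM, hYanti, E, hE, hYE⟩ := hY
  have hpsb := psb_inter h₁ hC hdc hcomp hr₁ hr.1
  have hrE : r ∈ E := (hE.isRoot ⟨⟨hr.1, hr₁.1⟩, fun x hx => hr₁.2 x hx.2⟩).1
  have hEdc : DownClosedIn E B₁ := fun x hx ζ hζ hζx =>
    hE.downClosedIn hpsb.1 x hx ζ (hdc x (hE.2.1 hx) ζ hζ hζx) hζx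
  have hEC : E ⊆ C := fun x hx => (hE.2.1 hx).1
  refine ⟨hYM, hYanti, hullIn C E Y, hC.sb_of_downClosedIn (sep_subset _ _)
    (downClosedIn_hullIn hC hEC) hr ⟨hr.1, Or.inl ⟨r, hrE, le_rfl⟩⟩ fun γ hγ => ?_,
    isFront_hullIn hC hEC hYanti hYE⟩
  exact finite_succIn_diff_hullIn h₁ hC hdc hcomp hE.2.1 hEdc hr₁ hrE
    (fun x hx => (hE.2.2.2 x hx).2) hYE hγ

theorem leStar_of_forall_isAlmostFront (h₁ : CWT M B₁) (h₂ : CWT M B₂)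
    (h : ∀ Y, IsAlmostFront M B₁ Y → IsAlmostFront M B₂ Y) : leStar M B₁ B₂ := by
  obtain ⟨r, hr₁⟩ := h₁.2.2.1
  obtain ⟨r₂, hr₂⟩ := h₂.2.2.1
  obtain rfl : r = r₂ :=
    (h {r} ((isFront_singleton_root hr₁).isAlmostFront h₁)).eq_root_of_singleton hr₂
  obtain ⟨-, -, C, hC, hCfr⟩ := h _ ((isFront_exitFront (B₂ := B₂) h₁).isAlmostFront h₁)
  have hdc := downClosedIn_inter_of_isFront hC.2.1 (hC.downClosedIn h₂) hCfr
  have hcomp := fun γ (hγ : γ ∈ C) => exists_maxIn_comparable_of_isFront hC.2.1 hCfr hγ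
  have hrC := hC.isRoot hr₂
  exact ⟨h₁, h₂, ⟨r, hr₁, hr₂⟩, C, hC, psb_inter h₁ hC.1 hdc hcomp hr₁ hrC.1,
    fun Y hY => (hY.of_inter h₁ hC.1 hdc hcomp hr₁ hrC).of_sb hC⟩

end Backward

/-- `B₁ ≤*_M B₂` iff every almost front of `B₁` is an almost front of `B₂`. -/
theorem leStar_iff_almostFront [PartialOrder α] (M B₁ B₂ : Set α)
    (h₁ : CWT M B₁) (h₂ : CWT M B₂) :
    leStar M B₁ B₂ ↔ ∀ Y, IsAlmostFront M B₁ Y → IsAlmostFront M B₂ Y :=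
  ⟨fun ⟨_, _, _, _, _, hpsb, htransfer⟩ Y hY => htransfer Y (hY.of_psb h₁ hpsb),
    leStar_of_forall_isAlmostFront h₁ h₂⟩
end

section
/- Let M be a partial order and let B₁, B₂ ∈ CWT(M). If B₂ ∈ psb(B₁), then B₁ ≤*_M B₂ and psb(B₂) ⊆ psb(B₁). -/
open Set Cardinal

universe u

variable {α : Type u}

/-- if `B₂ ∈ psb(B₁)` then `B₁ ≤*_M B₂` and `psb(B₂) ⊆ psb(B₁)`. -/
theorem psb_leStar [PartialOrder α] (M B₁ B₂ : Set α)
    (h₁ : CWT M B₁) (h₂ : CWT M B₂) (h : psb M B₁ B₂) :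
    leStar M B₁ B₂ ∧ ∀ B, psb M B₂ B → psb M B₁ B := by
  obtain ⟨hc, hsub, hroot, hsucc⟩ := h
  have hinter : B₂ ∩ B₁ = B₂ := Set.inter_eq_left.mpr hsub
  constructor
  · refine ⟨h₁, h₂, hroot, B₂, ?_, ?_, ?_⟩
    · obtain ⟨r, _, hr2⟩ := hroot
      exact ⟨h₂, subset_rfl, ⟨r, hr2, hr2⟩,
        fun ν _ => ⟨subset_rfl, by simp⟩⟩
    · rw [hinter]; exact ⟨hc, hsub, hroot, hsucc⟩
    · intro Y hY; rwa [hinter] at hY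
  · intro B hB
    obtain ⟨hBc, hBsub, hBroot, hBsucc⟩ := hB
    refine ⟨hBc, hBsub.trans hsub, ?_, ?_⟩
    · obtain ⟨r, hr1, hr2⟩ := hroot
      obtain ⟨s, hs2, hsB⟩ := hBroot
      have hrs : r = s := le_antisymm (hr2.2 s hs2.1) (hs2.2 r hr2.1)
      exact ⟨r, hr1, hrs ▸ hsB⟩
    · intro ν hν
      obtain ⟨hνB, hνmax⟩ := hν
      have hν₂ : ν ∈ B₂ := hBsub hνB
      have h2 := hsucc ν ⟨hν₂, hνmax⟩
      obtain ⟨ρ, hρ⟩ := h2.1.nonempty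
      have hνmax₂ : ν ∉ maxIn B₂ := by
        intro hm
        exact hm.2 ρ hρ.1 hρ.2.1
      have hB' := hBsucc ν ⟨hνB, hνmax₂⟩
      exact ⟨hB'.1, hB'.2.trans h2.2⟩
end

section
/- Let M be a partial order and B ∈ CWT(M). Suppose Y is an almost front of B and Z is an antichain of M such that Z is an almost front of B_{≥η} for every η ∈ Y. Then Z is an almost front of B. -/
open Set Cardinal

universe u

variable {α : Type u}

section Aux

variable [PartialOrder α]

lemma succIn_restrict (B : Set α) {η ν : α} (hην : η ≤ ν) :
    succIn (B ∩ {ρ | η ≤ ρ}) ν = succIn B ν := by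
  ext ρ
  constructor
  · rintro ⟨⟨hρB, _⟩, hνρ, himm⟩
    exact ⟨hρB, hνρ, fun ⟨σ, hσ, h1, h2⟩ => himm ⟨σ, ⟨hσ, hην.trans h1.le⟩, h1, h2⟩⟩
  · rintro ⟨hρB, hνρ, himm⟩
    exact ⟨⟨hρB, hην.trans hνρ.le⟩, hνρ, fun ⟨σ, hσ, h1, h2⟩ => himm ⟨σ, hσ.1, h1, h2⟩⟩

end Aux

/-- if `Y` is an almost front of `B` and the antichain `Z` is an almost front
of `B_{≥η}` for every `η ∈ Y`, then `Z` is an almost front of `B`. -/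
theorem almostFront_glue [PartialOrder α] (M B : Set α) (hB : CWT M B)
    (Y Z : Set α) (hY : IsAlmostFront M B Y)
    (hZM : Z ⊆ M) (hZanti : ∀ η ∈ Z, ∀ ν ∈ Z, η ≠ ν → ¬η ≤ ν)
    (hZ : ∀ η ∈ Y, IsAlmostFront M (B ∩ {ρ | η ≤ ρ}) Z) :
    IsAlmostFront M B Z := by
  obtain ⟨hYM, hYanti, B₀, hsb₀, hfr₀⟩ := hY
  obtain ⟨hCWT₀, hB₀B, ⟨r, hrB, hrB₀⟩, hsucc₀⟩ := hsb₀
  obtain ⟨hFsub, hFanti, hFmax⟩ := hfr₀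
  have treeB := hB.2.2.2.1
  have hZ' : ∀ η, ∃ Cη : Set α, η ∈ Y →
      sb M (B ∩ {ρ | η ≤ ρ}) Cη ∧ IsFront Cη (Z ∩ Cη) := by
    intro η
    by_cases h : η ∈ Y
    · obtain ⟨Cη, hCη⟩ := (hZ η h).2.2
      exact ⟨Cη, fun _ => hCη⟩
    · exact ⟨∅, fun h' => absurd h' h⟩
  choose C hC using hZ'
  set F : Set α := Y ∩ B₀ with hFdef
  have hCsub : ∀ η ∈ F, C η ⊆ B ∩ {ρ | η ≤ ρ} := fun η hη => ((hC η hη.1).1).2.1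
  have hCB : ∀ η ∈ F, C η ⊆ B := fun η hη x hx => (hCsub η hη hx).1
  have hCge : ∀ η ∈ F, ∀ x ∈ C η, η ≤ x := fun η hη x hx => (hCsub η hη hx).2
  have hηC : ∀ η ∈ F, η ∈ C η := by
    intro η hη
    obtain ⟨r', hr1, hr2⟩ := ((hC η hη.1).1).2.2.1
    have h1 : r' ≤ η := hr1.2 η ⟨hB₀B hη.2, le_refl η⟩
    have h2 : η ≤ r' := hr1.1.2
    have heq : r' = η := le_antisymm h1 h2
    exact heq ▸ hr2.1
  set B'' : Set α := {ν ∈ B₀ | ∃ η ∈ F, ν ≤ η} ∪ ⋃ η ∈ F, C η with hB''def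
  have hCB'' : ∀ η ∈ F, C η ⊆ B'' := fun η hη x hx =>
    Or.inr (Set.mem_biUnion hη hx)
  have hB''B : B'' ⊆ B := by
    rintro x (⟨hx, _⟩ | hx)
    · exact hB₀B hx
    · obtain ⟨η, hη, hxη⟩ := Set.mem_iUnion₂.1 hx
      exact hCB η hη hxη
  -- two distinct front elements below a common element: impossible
  have below : ∀ η ∈ F, ∀ η' ∈ F, ∀ ν : α, η' ≤ ν → ν < η → False := by
    intro η hη η' hη' ν h1 h2
    rcases eq_or_ne η' η with rfl | hne
    · exact absurd (h1.trans_lt h2) (lt_irrefl η')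
    · exact hYanti η' hη'.1 η hη.1 hne (h1.trans h2.le)
  have key0 : ∀ η ∈ F, ∀ ρ ∈ B'', η ≤ ρ → ρ ∈ C η := by
    rintro η hη ρ (⟨hρ₀, η'', hη'', hρη''⟩ | hρ) hηρ
    · have hee : η = η'' := by
        by_contra hne
        exact hYanti η hη.1 η'' hη''.1 hne (hηρ.trans hρη'')
      have : ρ = η := le_antisymm (hee ▸ hρη'') hηρ
      exact this ▸ hηC η hη
    · obtain ⟨η', hη', hρη'⟩ := Set.mem_iUnion₂.1 hρ
      have hρB : ρ ∈ B := hCB η' hη' hρη'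
      have hcomp := treeB ρ hρB η (hB₀B hη.2) η' (hB₀B hη'.2) hηρ (hCge η' hη' ρ hρη')
      have : η = η' := by
        rcases hcomp with h | h
        · by_contra hne; exact hYanti η hη.1 η' hη'.1 hne h
        · by_contra hne; exact hYanti η' hη'.1 η hη.1 (Ne.symm hne) h
      exact this ▸ hρη'
  have classify : ∀ ν ∈ B'', (ν ∈ B₀ ∧ ∃ η ∈ F, ν < η) ∨ (∃ η ∈ F, η ≤ ν ∧ ν ∈ C η) := by
    rintro ν (⟨hν₀, η, hη, hνη⟩ | hν)
    · rcases eq_or_lt_of_le hνη with rfl | hlt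
      · exact Or.inr ⟨ν, hη, le_refl ν, hηC ν hη⟩
      · exact Or.inl ⟨hν₀, η, hη, hlt⟩
    · obtain ⟨η, hη, hνη⟩ := Set.mem_iUnion₂.1 hν
      exact Or.inr ⟨η, hη, hCge η hη ν hνη, hνη⟩
  have key3 : ∀ η ∈ F, ∀ ν : α, η ≤ ν → succIn B'' ν = succIn (C η) ν := by
    intro η hη ν hην
    ext ρ
    constructor
    · rintro ⟨hρ, hνρ, himm⟩
      refine ⟨key0 η hη ρ hρ (hην.trans hνρ.le), hνρ, ?_⟩
      rintro ⟨σ, hσ, h1, h2⟩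
      exact himm ⟨σ, hCB'' η hη hσ, h1, h2⟩
    · rintro ⟨hρ, hνρ, himm⟩
      refine ⟨hCB'' η hη hρ, hνρ, ?_⟩
      rintro ⟨σ, hσ, h1, h2⟩
      exact himm ⟨σ, key0 η hη σ hσ (hην.trans h1.le), h1, h2⟩
  have key2 : ∀ ν ∈ B₀, (∃ η ∈ F, ν < η) → succIn B'' ν = succIn B₀ ν := by
    intro ν hν₀ hex
    obtain ⟨η, hη, hνη⟩ := hex
    ext ρ
    constructor
    · rintro ⟨hρ, hνρ, himm⟩
      rcases hρ with ⟨hρ₀, η'', hη'', hρη''⟩ | hρu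
      · refine ⟨hρ₀, hνρ, ?_⟩
        rintro ⟨σ, hσ₀, h1, h2⟩
        exact himm ⟨σ, Or.inl ⟨hσ₀, η'', hη'', h2.le.trans hρη''⟩, h1, h2⟩
      · obtain ⟨η', hη', hρη'⟩ := Set.mem_iUnion₂.1 hρu
        have hη'ρ := hCge η' hη' ρ hρη'
        have hρB : ρ ∈ B := hCB η' hη' hρη'
        have hcomp := treeB ρ hρB η' (hB₀B hη'.2) ν (hB₀B hν₀) hη'ρ hνρ.le
        have hνη' : ν < η' := by
          rcases hcomp with h | h
          · exact absurd (below η hη η' hη' ν h hνη) not_false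
          · rcases eq_or_lt_of_le h with rfl | h'
            · exact absurd (below η hη ν hη' ν (le_refl ν) hνη) not_false
            · exact h'
        rcases eq_or_lt_of_le hη'ρ with rfl | hlt
        · refine ⟨hη'.2, hνρ, ?_⟩
          rintro ⟨σ, hσ₀, h1, h2⟩
          exact himm ⟨σ, Or.inl ⟨hσ₀, η', hη', h2.le⟩, h1, h2⟩
        · exact absurd (himm ⟨η', Or.inl ⟨hη'.2, η', hη', le_refl η'⟩, hνη', hlt⟩) not_false
    · rintro ⟨hρ₀, hνρ, himm⟩
      have hρB'' : ρ ∈ B'' := by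
        obtain ⟨η'', hη'', hcmp⟩ := hFmax ρ hρ₀
        have hρη'' : ρ ≤ η'' := by
          rcases hcmp with h | h
          · rcases eq_or_lt_of_le h with rfl | h'
            · exact le_rfl
            · rcases treeB ρ (hB₀B hρ₀) η'' (hB₀B hη''.2) ν (hB₀B hν₀) h'.le hνρ.le with
                h2 | h2
              · exact absurd (below η hη η'' hη'' ν h2 hνη) not_false
              · rcases eq_or_lt_of_le h2 with rfl | h3
                · exact absurd (below η hη ν hη'' ν (le_refl ν) hνη) not_false
                · exact absurd (himm ⟨η'', hη''.2, h3, h'⟩) not_false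
          · exact h
        exact Or.inl ⟨hρ₀, η'', hη'', hρη''⟩
      refine ⟨hρB'', hνρ, ?_⟩
      rintro ⟨σ, hσ, h1, h2⟩
      rcases hσ with ⟨hσ₀, _⟩ | hσu
      · exact himm ⟨σ, hσ₀, h1, h2⟩
      · obtain ⟨η', hη', hση'⟩ := Set.mem_iUnion₂.1 hσu
        have hη'σ := hCge η' hη' σ hση'
        have hσB : σ ∈ B := hCB η' hη' hση'
        rcases treeB σ hσB η' (hB₀B hη'.2) ν (hB₀B hν₀) hη'σ h1.le with h3 | h3
        · exact below η hη η' hη' ν h3 hνη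
        · rcases eq_or_lt_of_le h3 with rfl | h4
          · exact below η hη ν hη' ν (le_refl ν) hνη
          · exact himm ⟨η', hη'.2, h4, lt_of_le_of_lt hη'σ h2⟩
  -- B'' is a CWT
  have hB''M : B'' ⊆ M := fun x hx => hB.1 (hB''B hx)
  have hB''count : B''.Countable := by
    refine Set.Countable.union (hCWT₀.2.1.mono (Set.sep_subset _ _)) ?_
    exact Set.Countable.biUnion (hCWT₀.2.1.mono Set.inter_subset_right)
      (fun η hη => ((hC η hη.1).1).1.2.1)
  have hroot'' : IsRoot B'' r := by
    constructor
    · obtain ⟨η, hη, _⟩ := hFmax r hrB₀.1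
      exact Or.inl ⟨hrB₀.1, η, hη, hrB₀.2 η hη.2⟩
    · exact fun x hx => hrB.2 x (hB''B hx)
  have hsuccinf : ∀ ν ∈ B'', succIn B'' ν = ∅ ∨ (succIn B'' ν).Infinite := by
    intro ν hν
    rcases classify ν hν with ⟨hν₀, hex⟩ | ⟨η, hη, hην, hνC⟩
    · rw [key2 ν hν₀ hex]
      exact hCWT₀.2.2.2.2.2.1 ν hν₀
    · rw [key3 η hη ν hην]
      exact ((hC η hη.1).1).1.2.2.2.2.2.1 ν hνC
  have hcondf : ∀ ν ∈ B'' \ maxIn B'', ∀ Fs : Finset α,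
      (Fs : Set α) ⊆ M \ {ρ | ρ ≤ ν} →
      {ϱ ∈ succIn B'' ν | ∀ ρ ∈ Fs, ¬Compat M ρ ϱ}.Infinite := by
    rintro ν ⟨hν'', hνmax⟩ Fs hFs
    have hex : ∃ ρ ∈ B'', ν < ρ := by
      by_contra h
      push_neg at h
      exact hνmax ⟨hν'', h⟩
    rcases classify ν hν'' with ⟨hν₀, η, hη, hνη⟩ | ⟨η, hη, hην, hνC⟩
    · rw [key2 ν hν₀ ⟨η, hη, hνη⟩]
      refine hCWT₀.2.2.2.2.2.2.2 ν ⟨hν₀, ?_⟩ Fs hFs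
      exact fun hmax => hmax.2 η hη.2 hνη
    · rw [key3 η hη ν hην]
      obtain ⟨ρ, hρ, hνρ⟩ := hex
      have hρC := key0 η hη ρ hρ (hην.trans hνρ.le)
      exact ((hC η hη.1).1).1.2.2.2.2.2.2.2 ν ⟨hνC, fun hmax => hmax.2 ρ hρC hνρ⟩ Fs hFs
  have hCWT'' : CWT M B'' :=
    ⟨hB''M, hB''count, ⟨r, hroot''⟩,
     fun ν hν η hη ρ hρ h1 h2 =>
       treeB ν (hB''B hν) η (hB''B hη) ρ (hB''B hρ) h1 h2,
     fun Cc hsub hch => hB.2.2.2.2.1 Cc (fun x hx => hB''B (hsub hx)) hch,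
     hsuccinf,
     fun η hη ν hν h1 h2 => hB.2.2.2.2.2.2.1 η (hB''B hη) ν (hB''B hν) h1 h2,
     hcondf⟩
  have hsucc'' : ∀ ν ∈ B'', succIn B'' ν ⊆ succIn B ν ∧ (succIn B ν \ succIn B'' ν).Finite := by
    intro ν hν
    rcases classify ν hν with ⟨hν₀, hex⟩ | ⟨η, hη, hην, hνC⟩
    · rw [key2 ν hν₀ hex]
      exact hsucc₀ ν hν₀
    · rw [key3 η hη ν hην, ← succIn_restrict B hην]
      exact ((hC η hη.1).1).2.2.2 ν hνC
  refine ⟨hZM, hZanti, B'', ⟨hCWT'', hB''B, ⟨r, hrB, hroot''⟩, hsucc''⟩, ?_⟩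
  refine ⟨fun x hx => hx.2, fun a ha b hb hne => hZanti a ha.1 b hb.1 hne, ?_⟩
  intro ν hν
  rcases classify ν hν with ⟨hν₀, η, hη, hνη⟩ | ⟨η, hη, hην, hνC⟩
  · obtain ⟨ζ, hζ, _⟩ := ((hC η hη.1).2).2.2 η (hηC η hη)
    have hηζ : η ≤ ζ := hCge η hη ζ hζ.2
    exact ⟨ζ, ⟨hζ.1, hCB'' η hη hζ.2⟩, Or.inr (hνη.le.trans hηζ)⟩
  · obtain ⟨ζ, hζ, hcmp⟩ := ((hC η hη.1).2).2.2 ν hνC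
    exact ⟨ζ, ⟨hζ.1, hCB'' η hη hζ.2⟩, hcmp⟩
end

section
/- Let x ∈ 𝐊, let F be a finite subset of M_x \ {rt_x}, and let B ∈ ℬ_x. Then there is a maximal chain C of B such that for every ρ ∈ F and every σ ∈ C, ρ ≰_{M_x} σ. -/
open Set Cardinal

universe u

variable {α : Type u}

section KDefs

variable (α) [PartialOrder α]

/-- A member of the class `𝐊`: a system of approximations to a system of ultrafilters. -/
structure KSys where
  /-- the underlying set of the partial order `M_x` (the order is inherited from `α`) -/
  M : Set α
  /-- the root, i.e. the least element, of `M_x` -/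
  rt : α
  rt_mem : rt ∈ M
  rt_least : ∀ a ∈ M, rt ≤ a
  /-- the system `⟨𝒜^x_η : η ∈ M_x⟩` -/
  A : α → Set (Set α)
  A_empty : ∀ η, η ∉ M → A η = ∅
  A_cwt : ∀ η ∈ M, ∀ B ∈ A η, CWT M B
  A_root : ∀ η ∈ M, ∀ B ∈ A η, IsRoot B η
  A_singleton : ∀ η ∈ M, {η} ∈ A η
  /-- the partial order `≤_x` on `ℬ_x = 𝒜^x_{rt} \ {{rt}}` -/
  lex : Set α → Set α → Prop
  lex_mem : ∀ B₁ B₂, lex B₁ B₂ →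
    B₁ ∈ A rt \ {({rt} : Set α)} ∧ B₂ ∈ A rt \ {({rt} : Set α)}
  lex_refl : ∀ B ∈ A rt \ {({rt} : Set α)}, lex B B
  lex_trans : ∀ B₁ B₂ B₃, lex B₁ B₂ → lex B₂ B₃ → lex B₁ B₃
  lex_antisymm : ∀ B₁ B₂, lex B₁ B₂ → lex B₂ B₁ → B₁ = B₂
  lex_directed : ∀ B₁ ∈ A rt \ {({rt} : Set α)}, ∀ B₂ ∈ A rt \ {({rt} : Set α)},
    ∃ B₃ ∈ A rt \ {({rt} : Set α)}, lex B₁ B₃ ∧ lex B₂ B₃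
  lex_leStar : ∀ B₁ B₂, lex B₁ B₂ → leStar M B₁ B₂
  A_restrict : ∀ η ∈ M, ∀ B ∈ A η, ∀ ν ∈ B, B ∩ {ρ | ν ≤ ρ} ∈ A ν

variable {α}

namespace KSys

/-- `ℬ_x = 𝒜^x_{rt_x} \ {{rt_x}}`. -/
def Bf (x : KSys α) : Set (Set α) :=
  x.A x.rt \ {({x.rt} : Set α)}

/-- The filter `D^x_Y` on an almost front `Y`. -/
def D (x : KSys α) (Y : Set α) : Set (Set α) :=
  {Z | Z ⊆ Y ∧ ∃ B ∈ x.Bf, ∃ B', sb x.M B B' ∧ IsAlmostFront x.M B Y ∧ B' ∩ Y ⊆ Z}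

/-- The ideal `id_x(ν,B)` on `suc_B(ν)`. -/
def idl (x : KSys α) (ν : α) (B : Set α) : Set (Set α) :=
  {C | C ⊆ succIn B ν ∧ ∃ F : Finset α, (F : Set α) ⊆ x.M \ {ρ | ν ≤ ρ} ∧
    ∀ ϱ ∈ C, ∃ ρ ∈ F, Compat x.M ϱ ρ}

/-- `‖x‖ = |M_x| + Σ {|𝒜^x_η| : η ∈ M_x}`. -/
noncomputable def norm (x : KSys α) : Cardinal.{u} :=
  Cardinal.mk ↥x.M + Cardinal.sum fun η : ↥x.M => Cardinal.mk ↥(x.A ↑η)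

end KSys

/-- The relation `x ≤_𝐊 y`. -/
def KLE (x y : KSys α) : Prop :=
  x.M ⊆ y.M ∧
  (∀ η ∈ x.M, ∀ ν ∈ x.M, (Compat x.M η ν ↔ Compat y.M η ν)) ∧
  (∀ η ∈ x.M, x.A η ⊆ y.A η) ∧
  y.rt = x.rt ∧
  (∀ B₁ ∈ x.Bf, ∀ B₂ ∈ x.Bf, (x.lex B₁ B₂ ↔ y.lex B₁ B₂))

end KDefs

/-- for `x ∈ 𝐊`, a finite `F ⊆ M_x \ {rt_x}` and `B ∈ ℬ_x`, there is a
maximal chain `C` of `B` such that no member of `F` is `≤` any member of `C`. -/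
theorem exists_branch_avoiding [PartialOrder α] (x : KSys α) (F : Finset α)
    (hF : (F : Set α) ⊆ x.M \ {x.rt}) (B : Set α) (hB : B ∈ x.Bf) :
    ∃ C ⊆ B, IsChain (· ≤ ·) C ∧
      (∀ C', C ⊆ C' → C' ⊆ B → IsChain (· ≤ ·) C' → C' = C) ∧
      ∀ ρ ∈ F, ∀ σ ∈ C, ¬ρ ≤ σ := by
  obtain ⟨hBA, _⟩ := hB
  have hcwt : CWT x.M B := x.A_cwt x.rt x.rt_mem B hBA
  have hroot : IsRoot B x.rt := x.A_root x.rt x.rt_mem B hBA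
  obtain ⟨hBM, -, -, hlin, hfin, -, -, hbig⟩ := hcwt
  set S : Set α := {ν ∈ B | ∀ ρ ∈ F, ¬ρ ≤ ν} with hS
  have hrtS : x.rt ∈ S := by
    refine ⟨hroot.1, fun ρ hρ hle => ?_⟩
    have hρM := hF hρ
    exact hρM.2 (le_antisymm hle (x.rt_least ρ hρM.1))
  have hstep : ∀ ν ∈ S, ν ∉ maxIn B → ∃ μ ∈ S, ν < μ := by
    intro ν hν hmax
    have hFsub : (F : Set α) ⊆ x.M \ {ρ | ρ ≤ ν} := fun ρ hρ =>
      ⟨(hF hρ).1, hν.2 ρ hρ⟩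
    obtain ⟨ϱ, hϱ⟩ := (hbig ν ⟨hν.1, hmax⟩ F hFsub).nonempty
    refine ⟨ϱ, ⟨hϱ.1.1, fun ρ hρ hle => ?_⟩, hϱ.1.2.1⟩
    exact hϱ.2 ρ hρ ⟨ϱ, hBM hϱ.1.1, hle, le_refl ϱ⟩
  have hmaxex : ∃ ν ∈ S, ν ∈ maxIn B := by
    by_contra h
    push_neg at h
    choose f hfS hflt using fun (p : {ν // ν ∈ S}) => hstep p.1 p.2 (h p.1 p.2)
    set g : {ν // ν ∈ S} → {ν // ν ∈ S} := fun p => ⟨f p, hfS p⟩ with hg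
    set seq : ℕ → {ν // ν ∈ S} := fun n => g^[n] ⟨x.rt, hrtS⟩ with hseq
    have hsm : StrictMono (fun n => (seq n).1) := by
      refine strictMono_nat_of_lt_succ fun n => ?_
      have : seq (n + 1) = g (seq n) := by
        simp [hseq, Function.iterate_succ_apply']
      rw [this]
      exact hflt (seq n)
    have hchain : IsChain (· ≤ ·) (Set.range fun n => (seq n).1) := by
      rintro a ⟨m, rfl⟩ b ⟨n, rfl⟩ hne
      rcases le_total m n with hmn | hmn
      · exact Or.inl (hsm.monotone hmn)
      · exact Or.inr (hsm.monotone hmn)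
    have hsub : (Set.range fun n => (seq n).1) ⊆ B := by
      rintro a ⟨n, rfl⟩; exact (seq n).2.1
    exact (Set.infinite_range_of_injective hsm.injective) (hfin _ hsub hchain)
  obtain ⟨ν, hνS, hνmax⟩ := hmaxex
  refine ⟨{σ ∈ B | σ ≤ ν}, fun σ hσ => hσ.1, ?_, ?_, ?_⟩
  · intro a ha b hb hne
    exact hlin ν hνS.1 a ha.1 b hb.1 ha.2 hb.2
  · intro C' hCC' hC'B hC'chain
    have hνC' : ν ∈ C' := hCC' ⟨hνS.1, le_refl ν⟩
    ext τ
    refine ⟨fun hτ => ?_, fun hτ => hCC' hτ⟩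
    refine ⟨hC'B hτ, ?_⟩
    by_cases hτν : τ = ν
    · exact le_of_eq hτν
    · rcases hC'chain hτ hνC' hτν with hle | hle
      · exact hle
      · exact absurd (lt_of_le_of_ne hle (Ne.symm hτν)) (hνmax.2 τ (hC'B hτ))
  · intro ρ hρ σ hσ hle
    exact hνS.2 ρ hρ (le_trans hle hσ.2)
end
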